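/- arXiv:1307.6623 — 2 statements merged into one kernel-verified Lean document; each statement's English description precedes it below -/
import Mathlib

section
/- Let p, q be idempotents in a ring R with p − q Drazin invertible, and H := (p−q)^D(p−q). Then qHq = qH = Hq = HqH. -/
/-!
The spectral idempotent `H = (p - q)ᴰ (p - q)` commutes with `q`. Indeed `(p - q)²` commutes with
both idempotents, the Drazin inverse of `(p - q)²` is `((p - q)ᴰ)²`, a Drazin inverse lies in the
double commutant of its element, and `H = ((p - q)ᴰ)² (p - q)²`. For commuting idempotents `q`
and `H` the three identities are immediate.
-/

/-- `b` is the Drazin inverse of `a`. -/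
def IsDrazinInverse {R : Type*} [Ring R] (a b : R) : Prop :=
  a * b = b * a ∧ b * a * b = b ∧ IsNilpotent (a - a * a * b)

namespace IsDrazinInverse

variable {R : Type*} [Ring R] {a b : R}

theorem commute (h : IsDrazinInverse a b) : Commute a b := h.1

theorem mul_mul_self (h : IsDrazinInverse a b) : b * a * b = b := h.2.1

theorem mul_mul_self_left (h : IsDrazinInverse a b) : b * b * a = b := by
  rw [mul_assoc, ← h.commute.eq, ← mul_assoc, h.mul_mul_self]

theorem isIdempotentElem_mul (h : IsDrazinInverse a b) : IsIdempotentElem (a * b) := by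
  rw [IsIdempotentElem, mul_assoc, ← mul_assoc b, h.mul_mul_self]

theorem eq_pow_succ_mul_pow (h : IsDrazinInverse a b) (n : ℕ) : b = b ^ (n + 1) * a ^ n := by
  induction n with
  | zero => simp
  | succ n ih =>
    calc b = b ^ n * (b * b * a) * a ^ n := by rw [h.mul_mul_self_left, ← pow_succ, ← ih]
      _ = b ^ (n + 1 + 1) * a ^ (n + 1) := by rw [pow_succ, pow_succ, pow_succ']; noncomm_ring

theorem exists_pow_mul_one_sub_eq_zero (h : IsDrazinInverse a b) :
    ∃ k, a ^ k * (1 - a * b) = 0 := by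
  obtain ⟨k, hk⟩ := h.2.2
  have hcomm : Commute a (1 - a * b) :=
    (Commute.one_right a).sub_right ((Commute.refl a).mul_right h.commute)
  refine ⟨k + 1, ?_⟩
  rw [← h.isIdempotentElem_mul.one_sub.pow_succ_eq k, ← hcomm.mul_pow, mul_sub, mul_one,
    ← mul_assoc, pow_succ, hk, zero_mul]

theorem commute_of_commute (h : IsDrazinInverse a b) {x : R} (hx : Commute x a) :
    Commute x b := by
  obtain ⟨k, hk⟩ := h.exists_pow_mul_one_sub_eq_zero
  have hk' : (1 - a * b) * a ^ k = 0 := by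
    rw [← (((Commute.one_right a).sub_right
      ((Commute.refl a).mul_right h.commute)).pow_left k).eq, hk]
  have hb : b = b ^ (k + 1) * a ^ k := h.eq_pow_succ_mul_pow k
  have hb' : b = a ^ k * b ^ (k + 1) := hb.trans (h.commute.pow_pow k (k + 1)).symm.eq
  -- `1 - a * b` annihilates a power of `a`, and `b` factors through that power on either side
  have hbx : b * x = b * x * (a * b) := by
    have : b * x * (1 - a * b) = 0 := by
      calc b * x * (1 - a * b) = b ^ (k + 1) * (a ^ k * x) * (1 - a * b) := by
            rw [← mul_assoc, ← hb]
        _ = b ^ (k + 1) * x * (a ^ k * (1 - a * b)) := by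
            rw [← (hx.pow_right k).eq]; noncomm_ring
        _ = 0 := by rw [hk, mul_zero]
    rwa [mul_sub, mul_one, sub_eq_zero] at this
  have hxb : x * b = a * b * (x * b) := by
    have : (1 - a * b) * (x * b) = 0 := by
      calc (1 - a * b) * (x * b) = (1 - a * b) * (x * a ^ k) * b ^ (k + 1) := by
            rw [mul_assoc, mul_assoc x, ← hb']
        _ = (1 - a * b) * a ^ k * (x * b ^ (k + 1)) := by
            rw [(hx.pow_right k).eq]; noncomm_ring
        _ = 0 := by rw [hk', zero_mul]
    rwa [sub_mul, one_mul, sub_eq_zero] at this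
  calc x * b = a * b * x * b := by rw [hxb, ← mul_assoc]
    _ = b * (a * x) * b := by rw [h.commute.eq]; noncomm_ring
    _ = b * x * (a * b) := by rw [← hx.eq]; noncomm_ring
    _ = b * x := hbx.symm

theorem pow (h : IsDrazinInverse a b) (n : ℕ) : IsDrazinInverse (a ^ n) (b ^ n) := by
  have hba : Commute (b * a) b := by
    rw [Commute, SemiconjBy, h.mul_mul_self, ← mul_assoc, h.mul_mul_self_left]
  refine ⟨(h.commute.pow_pow n n).eq, ?_, ?_⟩
  · rw [← h.commute.symm.mul_pow, ← hba.mul_pow, h.mul_mul_self]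
  · rcases n with _ | n
    · simp
    have hsub : a ^ (n + 1) - a ^ (n + 1) * a ^ (n + 1) * b ^ (n + 1)
        = a ^ n * (a - a * a * b) := by
      rw [mul_assoc, ← h.commute.mul_pow, h.isIdempotentElem_mul.pow_succ_eq, pow_succ]
      noncomm_ring
    rw [hsub]
    exact Commute.isNilpotent_mul_left
      (((Commute.refl a).sub_right (((Commute.refl a).mul_right (Commute.refl a)).mul_right
        h.commute)).pow_left n) h.2.2

theorem mul_eq_sq_mul_sq (h : IsDrazinInverse a b) : b * a = b ^ 2 * a ^ 2 := by
  rw [sq, sq, ← mul_assoc, h.mul_mul_self_left]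

theorem commute_mul_of_commute_sq (h : IsDrazinInverse a b) {x : R} (hx : Commute x (a ^ 2)) :
    Commute x (b * a) :=
  h.mul_eq_sq_mul_sq ▸ ((h.pow 2).commute_of_commute hx).mul_right hx

end IsDrazinInverse

theorem IsIdempotentElem.commute_sub_sq {R : Type*} [Ring R] {p q : R} (hp : IsIdempotentElem p)
    (hq : IsIdempotentElem q) : Commute q ((p - q) ^ 2) := by
  have hsq : (p - q) ^ 2 = p - p * q - q * p + q := by
    rw [sq, sub_mul, mul_sub, mul_sub, hp.eq, hq.eq]; abel
  rw [Commute, SemiconjBy, hsq]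
  simp only [mul_add, mul_sub, add_mul, sub_mul, ← mul_assoc, hq.eq]
  simp only [mul_assoc, hq.eq]
  abel

theorem stmt5 {R : Type*} [Ring R] (p q d : R) (hp : p * p = p) (hq : q * q = q)
    (hd : IsDrazinInverse (p - q) d) :
    q * (d * (p - q)) * q = q * (d * (p - q)) ∧
      q * (d * (p - q)) = (d * (p - q)) * q ∧
      (d * (p - q)) * q = (d * (p - q)) * q * (d * (p - q)) := by
  have hH : IsIdempotentElem (d * (p - q)) := hd.commute.eq ▸ hd.isIdempotentElem_mul
  have hc : Commute q (d * (p - q)) :=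
    hd.commute_mul_of_commute_sq (IsIdempotentElem.commute_sub_sq hp hq)
  exact ⟨by rw [hc.eq, mul_assoc, hq], hc.eq, by rw [← hc.eq, mul_assoc, hH.eq]⟩
end

section
/- Let p, q be idempotents in a ring R with 1 − p − q Drazin invertible. Then pq is Drazin invertible with (pq)^D = ((1−p−q)^D)⁴ pq. -/
section DrazinAux

variable {R : Type*} [Ring R]

private lemma idem_pow {E : R} (hE : E * E = E) : ∀ n, E ^ (n + 1) = E
  | 0 => pow_one E
  | n + 1 => by rw [pow_succ, idem_pow hE n, hE]

private lemma one_sub_idem {E : R} (hE : E * E = E) : (1 - E) * (1 - E) = 1 - E := by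
  rw [sub_mul, one_mul, mul_sub, mul_one, hE]; abel

private lemma nil_aux {A E : R} (hE : E * E = E) (hcom : E * A = A * E) :
    ∀ m, (A * (1 - E)) ^ (m + 1) = A ^ (m + 1) * (1 - E)
  | 0 => by rw [pow_one, pow_one]
  | m + 1 => by
    have h1E : (1 - E) * A = A * (1 - E) := by
      rw [sub_mul, one_mul, mul_sub, mul_one, hcom]
    calc (A * (1 - E)) ^ (m + 2)
        = (A ^ (m + 1) * (1 - E)) * (A * (1 - E)) := by
          rw [pow_succ, nil_aux hE hcom m]
      _ = A ^ (m + 1) * (((1 - E) * A) * (1 - E)) := by noncomm_ring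
      _ = A ^ (m + 1) * (A * ((1 - E) * (1 - E))) := by rw [h1E, mul_assoc]
      _ = A ^ (m + 2) * (1 - E) := by rw [one_sub_idem hE, pow_succ]; noncomm_ring

private lemma dz_comm {A D x : R} (h1 : A * D = D * A) (h2 : D * A * D = D)
    (h3 : IsNilpotent (A - A * A * D)) (hx : x * A = A * x) : x * D = D * x := by
  obtain ⟨k, hk⟩ := h3
  have hE : (A * D) * (A * D) = A * D := by
    calc (A * D) * (A * D) = A * (D * A * D) := by noncomm_ring
      _ = A * D := by rw [h2]
  have hcom : (A * D) * A = A * (A * D) := by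
    rw [mul_assoc, ← h1]
  have hN : A - A * A * D = A * (1 - A * D) := by
    rw [mul_sub, mul_one, ← mul_assoc]
  have hAk : A ^ (k + 1) * (1 - A * D) = 0 := by
    rw [← nil_aux hE hcom k, ← hN, pow_succ, hk, zero_mul]
  have hADK : A ^ (k + 1) * D ^ (k + 1) = A * D := by
    rw [← (Commute.mul_pow h1 (k + 1) : (A * D) ^ (k+1) = _), idem_pow hE]
  have hDAK : D ^ (k + 1) * A ^ (k + 1) = A * D := by
    rw [← (Commute.mul_pow h1.symm (k + 1) : (D * A) ^ (k+1) = _), ← h1, idem_pow hE]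
  have hxAK : x * A ^ (k + 1) = A ^ (k + 1) * x :=
    (Commute.pow_right (hx : Commute x A) (k + 1) : _)
  have hEcomA : (1 - A * D) * A ^ (k + 1) = A ^ (k + 1) * (1 - A * D) := by
    have : (A * D) * A ^ (k + 1) = A ^ (k + 1) * (A * D) :=
      (Commute.pow_right (hcom : Commute (A * D) A) (k + 1) : _)
    rw [sub_mul, one_mul, mul_sub, mul_one, this]
  have hzero : (1 - A * D) * A ^ (k + 1) = 0 := by rw [hEcomA, hAk]
  have h1' : (A * D) * x = (A * D) * x * (A * D) := by
    have : (A * D) * x * (1 - A * D) = 0 := by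
      calc (A * D) * x * (1 - A * D)
          = D ^ (k+1) * ((A ^ (k+1) * x) * (1 - A * D)) := by rw [← hDAK]; noncomm_ring
        _ = D ^ (k+1) * (x * (A ^ (k+1) * (1 - A * D))) := by rw [← hxAK, mul_assoc]
        _ = 0 := by rw [hAk, mul_zero, mul_zero]
    rwa [mul_sub, mul_one, sub_eq_zero] at this
  have h2' : x * (A * D) = (A * D) * x * (A * D) := by
    have : (1 - A * D) * x * (A * D) = 0 := by
      calc (1 - A * D) * x * (A * D)
          = (1 - A * D) * (x * A ^ (k+1)) * D ^ (k+1) := by rw [← hADK]; noncomm_ring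
        _ = ((1 - A * D) * A ^ (k+1)) * x * D ^ (k+1) := by rw [hxAK]; noncomm_ring
        _ = 0 := by rw [hzero, zero_mul, zero_mul]
    rwa [sub_mul, one_mul, sub_mul, sub_eq_zero] at this
  have hEx : (A * D) * x = x * (A * D) := by rw [h1', h2']
  have hDE : D * (A * D) = D := by rw [← mul_assoc, h2]
  have hED : (A * D) * D = D := by rw [h1, h2]
  calc x * D = x * ((A * D) * D) := by rw [hED]
    _ = ((A * D) * x) * D := by rw [← mul_assoc, ← hEx]
    _ = D * ((A * x) * D) := by rw [h1]; noncomm_ring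
    _ = D * (x * (A * D)) := by rw [← hx, mul_assoc]
    _ = D * ((A * D) * x) := by rw [hEx]
    _ = D * x := by rw [← mul_assoc, hDE]

end DrazinAux

theorem stmt11 {R : Type*} [Ring R] (p q d : R) (hp : p * p = p) (hq : q * q = q)
    (hd : IsDrazinInverse (1 - p - q) d) :
    IsDrazinInverse (p * q) (d ^ 4 * (p * q)) := by
  obtain ⟨h1, h2, h3⟩ := hd
  set a := 1 - p - q with ha
  -- basic identities
  have hpa : p * a = -(p * q) := by rw [ha, mul_sub, mul_sub, mul_one, hp]; abel
  have hap : a * p = -(q * p) := by rw [ha, sub_mul, sub_mul, one_mul, hp]; abel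
  have haq : a * q = -(p * q) := by rw [ha, sub_mul, sub_mul, one_mul, hq]; abel
  have hqa : q * a = -(q * p) := by rw [ha, mul_sub, mul_sub, mul_one, hq]; abel
  have hpq' : p * q = -(a * q) := by rw [haq, neg_neg]
  have hqp' : q * p = -(a * p) := by rw [hap, neg_neg]
  -- p, q commute with a²
  have hpaa : p * (a * a) = (a * a) * p := by
    have l : p * (a * a) = p * q * p := by
      rw [← mul_assoc, hpa, neg_mul, mul_assoc, hqa, mul_neg, neg_neg, ← mul_assoc]
    have r : (a * a) * p = p * q * p := by
      rw [mul_assoc, hap, mul_neg, ← mul_assoc, haq, neg_mul, neg_neg]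
    rw [l, r]
  have hqaa : q * (a * a) = (a * a) * q := by
    have l : q * (a * a) = q * (p * q) := by
      rw [← mul_assoc, hqa, neg_mul, mul_assoc, hpa, mul_neg, neg_neg]
    have r : (a * a) * q = q * (p * q) := by
      rw [mul_assoc, haq, mul_neg, ← mul_assoc, hap, neg_mul, neg_neg, mul_assoc]
    rw [l, r]
  -- Drazin data for a², d²
  have hdda : (d * d) * a = d := by rw [mul_assoc, ← h1, ← mul_assoc, h2]
  have hadd : a * (d * d) = d := by rw [← mul_assoc, h1, h2]
  have hcad : Commute a d := h1
  have c1 : Commute (a * a) d := hcad.mul_left hcad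
  have hsq1 : (a * a) * (d * d) = (d * d) * (a * a) := (c1.mul_right c1 : _)
  have hsq2 : (d * d) * (a * a) * (d * d) = d * d := by
    calc (d * d) * (a * a) * (d * d) = ((d * d) * a) * (a * (d * d)) := by noncomm_ring
      _ = d * d := by rw [hdda, hadd]
  -- nilpotency data
  obtain ⟨k, hk⟩ := h3
  have he : (a * d) * (a * d) = a * d := by
    calc (a * d) * (a * d) = a * (d * a * d) := by noncomm_ring
      _ = a * d := by rw [h2]
  have hecom : (a * d) * a = a * (a * d) := by rw [mul_assoc, ← h1]
  have hN : a - a * a * d = a * (1 - a * d) := by rw [mul_sub a 1 (a * d), mul_one a, ← mul_assoc]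
  have hAk : a ^ (k + 1) * (1 - a * d) = 0 := by
    rw [← nil_aux he hecom k, ← hN, pow_succ, hk, zero_mul]
  have h4 : (a * a) * (d * d) = a * d := by rw [mul_assoc a a (d * d), hadd]
  have hpow : (a * a) ^ (k + 1) = a ^ (k + 1) * a ^ (k + 1) := by
    rw [← sq, ← pow_mul, two_mul, pow_add]
  have hecomC : Commute a (a * d) := hecom.symm
  have caae : Commute (a * a) (a * d) := hecomC.mul_left hecomC
  have hsq3 : IsNilpotent ((a * a) - (a * a) * (a * a) * (d * d)) := by
    have key : a * a - (a * a) * (a * a) * (d * d) = (a * a) * (1 - a * d) := by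
      rw [mul_sub (a * a) 1 (a * d), mul_one (a * a), mul_assoc (a * a) (a * a) (d * d), h4]
    refine ⟨k + 1, ?_⟩
    rw [key, nil_aux he caae.symm.eq k, hpow, mul_assoc, hAk, mul_zero]
  -- p, q commute with d²
  have hpdd : p * (d * d) = (d * d) * p := dz_comm hsq1 hsq2 hsq3 hpaa
  have hqdd : q * (d * d) = (d * d) * q := dz_comm hsq1 hsq2 hsq3 hqaa
  -- d⁴ facts
  have hd4 : d ^ 4 = (d * d) * (d * d) := by
    rw [show (4 : ℕ) = 2 + 2 from rfl, pow_add, sq]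
  have cpddC : Commute p (d * d) := hpdd
  have cqddC : Commute q (d * d) := hqdd
  have cpd4 : Commute p (d ^ 4) := by rw [hd4]; exact cpddC.mul_right cpddC
  have cqd4 : Commute q (d ^ 4) := by rw [hd4]; exact cqddC.mul_right cqddC
  have cpq_d4 : (p * q) * d ^ 4 = d ^ 4 * (p * q) := (cpd4.mul_left cqd4 : _)
  -- pq power identity
  have hqpq : q * (p * q) = a * (a * q) := by
    rw [← mul_assoc q p q, hqp', neg_mul, mul_assoc, hpq', mul_neg, neg_neg]
  have hpq2 : (p * q) * (p * q) = (a * a) * (p * q) := by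
    nth_rewrite 1 [hpq']
    rw [neg_mul, mul_assoc, hqpq, haq, mul_neg, mul_neg, neg_neg, ← mul_assoc a a (p * q)]
  have caapq : (a * a) * (p * q) = (p * q) * (a * a) := by
    rw [← mul_assoc (a * a) p q, ← hpaa, mul_assoc p (a * a) q, ← hqaa,
      ← mul_assoc p q (a * a)]
  -- part 1
  have G1 : (p * q) * (d ^ 4 * (p * q)) = (d ^ 4 * (p * q)) * (p * q) := by
    rw [← mul_assoc, cpq_d4, mul_assoc]
  -- key products
  have ha4 : (a * a) * (a * a) = a ^ 4 := by
    rw [show (4 : ℕ) = 2 + 2 from rfl, pow_add, sq]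
  have h44 : d ^ 4 * a ^ 4 = a * d := by
    rw [← Commute.mul_pow (hcad.symm : Commute d a) 4, ← h1]
    exact idem_pow he 3
  have hd4ad : d ^ 4 * (a * d) = d ^ 4 := by
    have hde : d * (a * d) = d := by rw [← mul_assoc, h2]
    show d ^ (3 + 1) * (a * d) = d ^ (3 + 1)
    rw [pow_succ, mul_assoc, hde]
  have hkey : d ^ 4 * (d ^ 4 * ((a * a) * (a * a))) = d ^ 4 := by
    rw [ha4, h44, hd4ad]
  have gw : (p * q) * (d ^ 4 * (p * q)) = d ^ 4 * ((a * a) * (p * q)) := by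
    rw [← mul_assoc (p * q) (d ^ 4) (p * q), cpq_d4, mul_assoc, hpq2]
  -- part 2
  have G2 : (d ^ 4 * (p * q)) * (p * q) * (d ^ 4 * (p * q)) = d ^ 4 * (p * q) := by
    calc (d ^ 4 * (p * q)) * (p * q) * (d ^ 4 * (p * q))
        = (d ^ 4 * (p * q)) * ((p * q) * (d ^ 4 * (p * q))) := by noncomm_ring
      _ = (d ^ 4 * (p * q)) * (d ^ 4 * ((a * a) * (p * q))) := by rw [gw]
      _ = d ^ 4 * (((p * q) * d ^ 4) * ((a * a) * (p * q))) := by noncomm_ring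
      _ = d ^ 4 * ((d ^ 4 * (p * q)) * ((a * a) * (p * q))) := by rw [cpq_d4]
      _ = d ^ 4 * (d ^ 4 * (((p * q) * (a * a)) * (p * q))) := by noncomm_ring
      _ = d ^ 4 * (d ^ 4 * (((a * a) * (p * q)) * (p * q))) := by rw [← caapq]
      _ = d ^ 4 * (d ^ 4 * ((a * a) * ((a * a) * (p * q)))) := by
          rw [mul_assoc (a * a) (p * q) (p * q), hpq2]
      _ = (d ^ 4 * (d ^ 4 * ((a * a) * (a * a)))) * (p * q) := by noncomm_ring
      _ = d ^ 4 * (p * q) := by rw [hkey]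
  -- part 3
  have caad4 : Commute (a * a) (d ^ 4) := c1.pow_right 4
  have hw2b : (p * q) * (p * q) * (d ^ 4 * (p * q)) = (a * d) * (p * q) := by
    calc (p * q) * (p * q) * (d ^ 4 * (p * q))
        = ((a * a) * (p * q)) * (d ^ 4 * (p * q)) := by rw [hpq2]
      _ = (a * a) * (((p * q) * d ^ 4) * (p * q)) := by noncomm_ring
      _ = (a * a) * ((d ^ 4 * (p * q)) * (p * q)) := by rw [cpq_d4]
      _ = ((a * a) * d ^ 4) * ((p * q) * (p * q)) := by noncomm_ring
      _ = (d ^ 4 * (a * a)) * ((a * a) * (p * q)) := by rw [caad4.eq, hpq2]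
      _ = (d ^ 4 * ((a * a) * (a * a))) * (p * q) := by noncomm_ring
      _ = (d ^ 4 * a ^ 4) * (p * q) := by rw [ha4]
      _ = (a * d) * (p * q) := by rw [h44]
  have cpe : p * (a * d) = (a * d) * p := by
    rw [← h4, ← mul_assoc p (a * a) (d * d), hpaa, mul_assoc (a * a) p (d * d), hpdd,
      ← mul_assoc (a * a) (d * d) p]
  have cqe : q * (a * d) = (a * d) * q := by
    rw [← h4, ← mul_assoc q (a * a) (d * d), hqaa, mul_assoc (a * a) q (d * d), hqdd,
      ← mul_assoc (a * a) (d * d) q]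
  have cpeC : Commute p (a * d) := cpe
  have cqeC : Commute q (a * d) := cqe
  have cpqe : Commute (p * q) (a * d) := cpeC.mul_left cqeC
  have cpq1e : (p * q) * (1 - a * d) = (1 - a * d) * (p * q) :=
    ((Commute.one_right (p * q)).sub_right cpqe).eq
  have caa1e : Commute (a * a) (1 - a * d) :=
    (Commute.one_right (a * a)).sub_right caae
  have Xpow : ∀ m, ((1 - a * d) * (p * q)) ^ (m + 1)
      = (1 - a * d) * ((a * a) ^ m * (p * q)) := by
    intro m
    induction m with
    | zero => rw [pow_one, pow_zero, one_mul]
    | succ m ih =>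
      have step : (p * q) * ((1 - a * d) * (p * q)) = (1 - a * d) * ((a * a) * (p * q)) := by
        rw [← mul_assoc (p * q) (1 - a * d) (p * q), cpq1e,
          mul_assoc (1 - a * d) (p * q) (p * q), hpq2]
      calc ((1 - a * d) * (p * q)) ^ (m + 2)
          = ((1 - a * d) * ((a * a) ^ m * (p * q))) * ((1 - a * d) * (p * q)) := by
            rw [pow_succ, ih]
        _ = (1 - a * d) * ((a * a) ^ m * ((p * q) * ((1 - a * d) * (p * q)))) := by
            noncomm_ring
        _ = (1 - a * d) * ((a * a) ^ m * ((1 - a * d) * ((a * a) * (p * q)))) := by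
            rw [step]
        _ = (1 - a * d) * (((a * a) ^ m * (1 - a * d)) * ((a * a) * (p * q))) := by
            noncomm_ring
        _ = ((1 - a * d) * (1 - a * d)) * ((a * a) ^ m * ((a * a) * (p * q))) := by
            rw [(caa1e.pow_left m).eq]; noncomm_ring
        _ = (1 - a * d) * ((a * a) ^ (m + 1) * (p * q)) := by
            rw [one_sub_idem he, ← mul_assoc ((a * a) ^ m) (a * a) (p * q), ← pow_succ]
  have h1ea : (1 - a * d) * a = a * (1 - a * d) := by
    rw [sub_mul 1 (a * d) a, one_mul a, mul_sub a 1 (a * d), mul_one a, hecom]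
  have h1eaC : Commute (1 - a * d) a := h1ea
  have h1eak : (1 - a * d) * a ^ (k + 1) = a ^ (k + 1) * (1 - a * d) :=
    (h1eaC.pow_right (k + 1)).eq
  have G3 : IsNilpotent ((p * q) - (p * q) * (p * q) * (d ^ 4 * (p * q))) := by
    rw [hw2b, show (p * q) - (a * d) * (p * q) = (1 - a * d) * (p * q) by
      rw [sub_mul 1 (a * d) (p * q), one_mul (p * q)]]
    refine ⟨k + 2, ?_⟩
    show ((1 - a * d) * (p * q)) ^ (k + 1 + 1) = 0
    rw [Xpow (k + 1), hpow, mul_assoc (a ^ (k + 1)) (a ^ (k + 1)) (p * q),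
      ← mul_assoc (1 - a * d) (a ^ (k + 1)) (a ^ (k + 1) * (p * q)), h1eak, hAk, zero_mul]
  exact ⟨G1, G2, G3⟩
end
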